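/- For any graph G with degree bound function f: V → ℕ, any partial f-factor M (a subgraph with deg_M(v) ≤ f(v) for all v), and any pair of disjoint vertex sets I, O ⊆ V, the number of edges |M| is at most f(I) + |γ(O)| + Σ_C ⌊(f(C) + |E[C,O]|)/2⌋, where γ(O) is the set of edges with both ends in O, the sum ranges over connected components C of G − I − O, f(S) denotes Σ_{v∈S} f(v), and E[C,O] is the set of edges joining C to O. -/

import Mathlib

open scoped BigOperators symmDiff

structure Multigraph (V E : Type) where
  fst : E → V
  snd : E → V

namespace Multigraph

variable {V E : Type}

/-- Edges with both endpoints in `S`. -/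
def gamma (G : Multigraph V E) (S : Set V) : Set E :=
  {e | G.fst e ∈ S ∧ G.snd e ∈ S}

/-- Edges with exactly one endpoint in `S`. -/
def delta (G : Multigraph V E) (S : Set V) : Set E :=
  {e | Xor' (G.fst e ∈ S) (G.snd e ∈ S)}

/-- Edges with one endpoint in `A` and the other in `B`. -/
def between (G : Multigraph V E) (A B : Set V) : Set E :=
  {e | (G.fst e ∈ A ∧ G.snd e ∈ B) ∨ (G.fst e ∈ B ∧ G.snd e ∈ A)}

/-- Degree of `v` in the sub-multigraph `M` (loops count twice). -/
noncomputable def degOn (G : Multigraph V E) (M : Set E) (v : V) : ℕ :=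
  (M ∩ {e | G.fst e = v}).ncard + (M ∩ {e | G.snd e = v}).ncard

/-- A partial `f`-factor: a sub-multigraph with all degrees at most `f`. -/
def IsPartialFactor (G : Multigraph V E) (f : V → ℕ) (M : Set E) : Prop :=
  ∀ v, G.degOn M v ≤ f v

/-- `f(S) = Σ_{v∈S} f(v)`. -/
noncomputable def fSum (f : V → ℕ) (S : Set V) : ℕ := ∑ᶠ v ∈ S, f v

/-- Adjacency restricted to vertices in `W`. -/
def adjOff (G : Multigraph V E) (W : Set V) (u v : V) : Prop :=
  u ∈ W ∧ v ∈ W ∧ ∃ e, (G.fst e = u ∧ G.snd e = v) ∨ (G.fst e = v ∧ G.snd e = u)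

/-- `C` is a connected component of `G − I − O`. -/
def IsComponent (G : Multigraph V E) (I O : Set V) (C : Set V) : Prop :=
  ∃ x, x ∉ I ∪ O ∧ C = {y | Relation.ReflTransGen (G.adjOff (I ∪ O)ᶜ) x y}

end Multigraph

/-! Every edge of `M` has an end in `I`, lies in `γ(O)`, or lies in `γ(C) ∪ E[C,O]` for a
component `C` of `G − I − O`. Edges of the first kind are counted by `Σ_{v ∈ I} deg_M v ≤ f(I)`.
For a component `C`, the degree sum `Σ_{v ∈ C} deg_M v ≤ f(C)` counts each edge of `M ∩ γ(C)`
twice and each edge of `M ∩ E[C,O]` once, so `2 |M ∩ (γ(C) ∪ E[C,O])| ≤ f(C) + |E[C,O]|`. -/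

open Set

lemma finsum_mem_le_finsum_mem {α M : Type*} [AddCommMonoid M] [PartialOrder M]
    [IsOrderedAddMonoid M] {f g : α → M} {s : Set α} (hs : s.Finite) (h : ∀ i ∈ s, f i ≤ g i) :
    ∑ᶠ i ∈ s, f i ≤ ∑ᶠ i ∈ s, g i := by
  rw [finsum_mem_eq_finite_toFinset_sum _ hs, finsum_mem_eq_finite_toFinset_sum _ hs]
  exact Finset.sum_le_sum fun i hi => h i (hs.mem_toFinset.1 hi)

lemma ncard_inter_preimage_eq_finsum {α β : Type*} [Finite α] [Finite β] (M : Set α)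
    (g : α → β) (S : Set β) :
    (M ∩ g ⁻¹' S).ncard = ∑ᶠ b ∈ S, (M ∩ {a | g a = b}).ncard := by
  have hdisj : S.PairwiseDisjoint fun b => M ∩ {a | g a = b} := fun _ _ _ _ hne =>
    disjoint_left.2 fun _ h h' => hne (h.2.symm.trans h'.2)
  rw [← S.toFinite.ncard_biUnion (fun _ _ => toFinite _) hdisj]
  congr 1
  ext a
  simp

namespace Multigraph

variable {V E : Type} (G : Multigraph V E)

lemma mem_gamma {S : Set V} {e : E} : e ∈ G.gamma S ↔ G.fst e ∈ S ∧ G.snd e ∈ S := Iff.rfl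

lemma mem_delta {S : Set V} {e : E} :
    e ∈ G.delta S ↔ G.fst e ∈ S ∧ G.snd e ∉ S ∨ G.snd e ∈ S ∧ G.fst e ∉ S := Iff.rfl

lemma finsum_degOn [Finite V] [Finite E] (M : Set E) (S : Set V) :
    ∑ᶠ v ∈ S, G.degOn M v = (M ∩ G.fst ⁻¹' S).ncard + (M ∩ G.snd ⁻¹' S).ncard := by
  rw [ncard_inter_preimage_eq_finsum, ncard_inter_preimage_eq_finsum,
    ← finsum_mem_add_distrib S.toFinite]
  rfl

lemma ncard_inter_preimage_fst_add_snd [Finite E] (M : Set E) (S : Set V) :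
    (M ∩ G.fst ⁻¹' S).ncard + (M ∩ G.snd ⁻¹' S).ncard =
      2 * (M ∩ G.gamma S).ncard + (M ∩ G.delta S).ncard := by
  have hunion : (M ∩ G.fst ⁻¹' S) ∪ (M ∩ G.snd ⁻¹' S) = (M ∩ G.gamma S) ∪ (M ∩ G.delta S) := by
    ext e
    by_cases h1 : G.fst e ∈ S <;> by_cases h2 : G.snd e ∈ S <;> simp [mem_gamma, mem_delta, h1, h2]
  have hinter : (M ∩ G.fst ⁻¹' S) ∩ (M ∩ G.snd ⁻¹' S) = M ∩ G.gamma S := by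
    ext e
    simp only [mem_gamma, mem_inter_iff, mem_preimage]
    tauto
  have hdisj : Disjoint (M ∩ G.gamma S) (M ∩ G.delta S) :=
    disjoint_left.2 fun _ ⟨_, h1, h2⟩ ⟨_, hx⟩ => by simp [mem_delta, h1, h2] at hx
  rw [← ncard_union_add_ncard_inter, hunion, hinter, ncard_union_eq hdisj]
  ring

lemma between_subset_delta {A B : Set V} (h : Disjoint A B) : G.between A B ⊆ G.delta A := by
  rintro e (⟨ha, hb⟩ | ⟨hb, ha⟩)
  · exact Or.inl ⟨ha, fun ha' => h.ne_of_mem ha' hb rfl⟩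
  · exact Or.inr ⟨ha, fun ha' => h.ne_of_mem ha' hb rfl⟩

variable {G} {f : V → ℕ} {M : Set E}

lemma IsPartialFactor.finsum_degOn_le [Finite V] (hM : G.IsPartialFactor f M) (S : Set V) :
    ∑ᶠ v ∈ S, G.degOn M v ≤ fSum f S :=
  finsum_mem_le_finsum_mem S.toFinite fun v _ => hM v

lemma IsPartialFactor.ncard_inter_incident_le [Finite V] [Finite E]
    (hM : G.IsPartialFactor f M) (S : Set V) :
    (M ∩ (G.fst ⁻¹' S ∪ G.snd ⁻¹' S)).ncard ≤ fSum f S :=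
  calc (M ∩ (G.fst ⁻¹' S ∪ G.snd ⁻¹' S)).ncard
      = ((M ∩ G.fst ⁻¹' S) ∪ (M ∩ G.snd ⁻¹' S)).ncard := by rw [inter_union_distrib_left]
    _ ≤ (M ∩ G.fst ⁻¹' S).ncard + (M ∩ G.snd ⁻¹' S).ncard := ncard_union_le _ _
    _ = ∑ᶠ v ∈ S, G.degOn M v := (G.finsum_degOn M S).symm
    _ ≤ fSum f S := hM.finsum_degOn_le S

lemma IsPartialFactor.two_mul_ncard_gamma_add_ncard_delta_le [Finite V] [Finite E]
    (hM : G.IsPartialFactor f M) (S : Set V) :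
    2 * (M ∩ G.gamma S).ncard + (M ∩ G.delta S).ncard ≤ fSum f S := by
  rw [← G.ncard_inter_preimage_fst_add_snd, ← G.finsum_degOn]
  exact hM.finsum_degOn_le S

lemma IsPartialFactor.ncard_inter_gamma_union_between_le [Finite V] [Finite E]
    (hM : G.IsPartialFactor f M) {C O : Set V} (hCO : Disjoint C O) :
    (M ∩ (G.gamma C ∪ G.between C O)).ncard ≤ (fSum f C + (G.between C O).ncard) / 2 := by
  rw [Nat.le_div_iff_mul_le two_pos]
  have hsplit : (M ∩ (G.gamma C ∪ G.between C O)).ncard ≤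
      (M ∩ G.gamma C).ncard + (M ∩ G.between C O).ncard := by
    rw [inter_union_distrib_left]
    exact ncard_union_le _ _
  have hdelta : (M ∩ G.between C O).ncard ≤ (M ∩ G.delta C).ncard :=
    ncard_le_ncard (inter_subset_inter_right _ (G.between_subset_delta hCO))
  have hbetween : (M ∩ G.between C O).ncard ≤ (G.between C O).ncard :=
    ncard_le_ncard inter_subset_right
  have hdeg := hM.two_mul_ncard_gamma_add_ncard_delta_le C
  omega

variable {I O : Set V}

lemma IsComponent.disjoint_right {C : Set V} (hC : G.IsComponent I O C) : Disjoint C O := by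
  obtain ⟨x, hx, rfl⟩ := hC
  refine disjoint_left.2 fun y hy hyO => ?_
  have hyIO : y ∉ I ∪ O := by
    induction hy with
    | refl => exact hx
    | tail _ hadj _ => exact hadj.2.1
  exact hyIO (Or.inr hyO)

lemma exists_isComponent_mem_gamma_union_between {e : E} (hfst : G.fst e ∉ I)
    (hsnd : G.snd e ∉ I) (hO : e ∉ G.gamma O) :
    ∃ C, G.IsComponent I O C ∧ e ∈ G.gamma C ∪ G.between C O := by
  by_cases hfstO : G.fst e ∈ O
  · have hsndO : G.snd e ∉ O := fun h => hO ⟨hfstO, h⟩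
    exact ⟨_, ⟨G.snd e, by simp [hsnd, hsndO], rfl⟩,
      Or.inr (Or.inr ⟨hfstO, Relation.ReflTransGen.refl⟩)⟩
  have hfstIO : G.fst e ∉ I ∪ O := by simp [hfst, hfstO]
  refine ⟨_, ⟨G.fst e, hfstIO, rfl⟩, ?_⟩
  by_cases hsndO : G.snd e ∈ O
  · exact Or.inr (Or.inl ⟨Relation.ReflTransGen.refl, hsndO⟩)
  · have hsndIO : G.snd e ∉ I ∪ O := by simp [hsnd, hsndO]
    exact Or.inl ⟨Relation.ReflTransGen.refl,
      Relation.ReflTransGen.single ⟨hfstIO, hsndIO, e, Or.inl ⟨rfl, rfl⟩⟩⟩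

variable (G M I O) in
lemma subset_incident_union_gamma_union_biUnion_components :
    M ⊆ (M ∩ (G.fst ⁻¹' I ∪ G.snd ⁻¹' I)) ∪ (M ∩ G.gamma O) ∪
      ⋃ C ∈ {C | G.IsComponent I O C}, M ∩ (G.gamma C ∪ G.between C O) := by
  intro e he
  by_cases hI : G.fst e ∈ I ∨ G.snd e ∈ I
  · exact Or.inl (Or.inl ⟨he, hI⟩)
  by_cases hO : e ∈ G.gamma O
  · exact Or.inl (Or.inr ⟨he, hO⟩)
  push Not at hI
  obtain ⟨C, hC, heC⟩ := G.exists_isComponent_mem_gamma_union_between hI.1 hI.2 hO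
  exact Or.inr (mem_biUnion hC ⟨he, heC⟩)

end Multigraph

open Multigraph

theorem stmt0_general {V E : Type} [Fintype V] [Fintype E]
    (G : Multigraph V E) (f : V → ℕ) (M : Set E) (I O : Set V)
    (hM : G.IsPartialFactor f M) :
    M.ncard ≤ fSum f I + (G.gamma O).ncard +
      ∑ᶠ C ∈ {C : Set V | G.IsComponent I O C},
        (fSum f C + (G.between C O).ncard) / 2 := by
  set 𝒞 := {C : Set V | G.IsComponent I O C}
  have hcomponents : (⋃ C ∈ 𝒞, M ∩ (G.gamma C ∪ G.between C O)).ncard ≤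
      ∑ᶠ C ∈ 𝒞, (fSum f C + (G.between C O).ncard) / 2 :=
    ((toFinite 𝒞).ncard_biUnion_le _).trans <| finsum_mem_le_finsum_mem (toFinite 𝒞)
      fun _ hC => hM.ncard_inter_gamma_union_between_le hC.disjoint_right
  calc M.ncard
      ≤ (M ∩ (G.fst ⁻¹' I ∪ G.snd ⁻¹' I)).ncard + (M ∩ G.gamma O).ncard +
          (⋃ C ∈ 𝒞, M ∩ (G.gamma C ∪ G.between C O)).ncard :=
        (ncard_le_ncard (G.subset_incident_union_gamma_union_biUnion_components M I O)).trans <|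
          (ncard_union_le _ _).trans (Nat.add_le_add_right (ncard_union_le _ _) _)
    _ ≤ fSum f I + (G.gamma O).ncard + ∑ᶠ C ∈ 𝒞, (fSum f C + (G.between C O).ncard) / 2 :=
        add_le_add (add_le_add (hM.ncard_inter_incident_le I) (ncard_le_ncard inter_subset_right))
          hcomponents

theorem stmt0 {V E : Type} [Fintype V] [Fintype E]
    (G : Multigraph V E) (f : V → ℕ) (M : Set E) (I O : Set V)
    (hM : G.IsPartialFactor f M) (hIO : Disjoint I O) :
    M.ncard ≤ fSum f I + (G.gamma O).ncard +
      ∑ᶠ C ∈ {C : Set V | G.IsComponent I O C},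
        (fSum f C + (G.between C O).ncard) / 2 :=
  stmt0_general G f M I O hM
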